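/- Let G be a control flow graph with entry node v₀, and let G′ be the graph obtained from G by replacing every node v of G with a nonempty directed chain of fresh nodes P_v (with an edge from each node of the chain to the next), replacing every edge (u,v) of G with an edge from the last node of P_u to the first node of P_v, and taking the first node of P_{v₀} as the entry node of G′. Then the interval partitions of G and G′ correspond: for every interval I(h) of G, the set ⋃_{v ∈ I(h)} P_v is an interval of G′ whose header is the first node of P_h, and every interval of G′ arises in this way. In particular, replacing basic-block nodes by chains of statement or token nodes does not alter the partitioning of a control flow graph into intervals. -/

import Mathlib

/-- A directed graph with a distinguished set of vertices and an entry node,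
used to model control flow graphs. -/
structure CFGraph (α : Type*) where
  verts : Set α
  Edge : α → α → Prop
  entry : α

namespace CFGraph

variable {α : Type*}

/-- `G` is a control flow graph: the entry node is a vertex, edges join vertices,
and every vertex is reachable from the entry node. -/
def IsCFG (G : CFGraph α) : Prop :=
  G.entry ∈ G.verts ∧ (∀ u v, G.Edge u v → u ∈ G.verts ∧ v ∈ G.verts) ∧
    ∀ v ∈ G.verts, Relation.ReflTransGen G.Edge G.entry v

/-- A closed path: a path (consecutive nodes are joined by edges) of length at least
two whose first and last nodes coincide. -/
def IsClosedPath (G : CFGraph α) (p : List α) : Prop :=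
  p.Chain' G.Edge ∧ 2 ≤ p.length ∧ p.head? = p.getLast?

/-- `e` is an entry node of the set `S`: `e ∈ S` and either `e` is the entry node of the
graph or some immediate predecessor of `e` lies outside `S`. -/
def IsEntry (G : CFGraph α) (S : Set α) (e : α) : Prop :=
  e ∈ S ∧ (e = G.entry ∨ ∃ u ∈ G.verts, u ∉ S ∧ G.Edge u e)

/-- `S` is a single-entry region with header `h` in which every closed path contains `h`. -/
def IntervalProp (G : CFGraph α) (h : α) (S : Set α) : Prop :=
  S ⊆ G.verts ∧ h ∈ S ∧ (∀ e, G.IsEntry S e ↔ e = h) ∧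
    ∀ p : List α, G.IsClosedPath p → (∀ v ∈ p, v ∈ S) → h ∈ p

/-- `S` is an interval with header `h`: a maximal set containing `h` such that `h` is the
unique entry node of `S` and every closed path lying within `S` contains `h`. -/
def IsInterval (G : CFGraph α) (h : α) (S : Set α) : Prop :=
  G.IntervalProp h S ∧ ∀ T, G.IntervalProp h T → S ⊆ T → T = S

/-- `P` is a partition of the vertices of `G` into intervals. -/
def IsIntervalPartition (G : CFGraph α) (P : Set (Set α)) : Prop :=
  (∀ S ∈ P, ∃ h, G.IsInterval h S) ∧ P.PairwiseDisjoint id ∧ ⋃₀ P = G.verts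

/-- `L` is a loop structure with header `h`: `h ∈ L`, there is a back edge from some
`m ∈ L` to `h`, every node of `L` other than `h` has all its immediate predecessors
inside `L`, and every node of `L` lies on a path within `L` starting at `h`. -/
def IsLoop (G : CFGraph α) (h : α) (L : Set α) : Prop :=
  L ⊆ G.verts ∧ h ∈ L ∧ (∃ m ∈ L, G.Edge m h) ∧
    (∀ v ∈ L, v ≠ h → ∀ u, G.Edge u v → u ∈ L) ∧
    ∀ v ∈ L, Relation.ReflTransGen (fun a b => G.Edge a b ∧ a ∈ L ∧ b ∈ L) h v

/-- The loop `L` with header `h` contains no inner loop construct: every closed path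
lying entirely within `L` contains `h`. -/
def NoInnerLoop (G : CFGraph α) (h : α) (L : Set α) : Prop :=
  ∀ p : List α, G.IsClosedPath p → (∀ v ∈ p, v ∈ L) → h ∈ p

end CFGraph

namespace CFGraph

variable {α β : Type*}

/-- Membership in the interval grown from header `h`, given that the nodes in `C`
already belong to previously constructed intervals: starting from `h`, repeatedly add
any node (not already in some interval) all of whose immediate predecessors already lie
in the interval. -/
inductive IntMem (G : CFGraph α) (C : Set α) (h : α) : α → Prop
  | head : IntMem G C h h
  | step (v : α) (hv : v ∈ G.verts) (hvC : v ∉ C)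
      (hpre : ∀ u, G.Edge u v → IntMem G C h u) : IntMem G C h v

/-- The interval constructed from header `h`, given already-covered nodes `C`. -/
def intervalOf (G : CFGraph α) (C : Set α) (h : α) : Set α := {v | IntMem G C h v}

/-- The new headers produced after computing an interval `I`: nodes not in any interval
(`C` is the set of covered nodes, including `I`) having at least one immediate
predecessor inside the just-computed interval `I` and at least one outside it. -/
def newHeaders (G : CFGraph α) (C : Set α) (I : Set α) : Set α :=
  {v | v ∈ G.verts ∧ v ∉ C ∧ (∃ m₁, G.Edge m₁ v ∧ m₁ ∈ I) ∧ ∃ m₂, G.Edge m₂ v ∧ m₂ ∉ I}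

/-- `Run G H C 𝒮`: starting from the pending header set `H` and covered node set `C`,
the iterative header-selection procedure can terminate (with no headers remaining)
having constructed precisely the collection `𝒮` of further header–interval pairs.
`Run G {G.entry} ∅ 𝒮` says that `𝒮` is the interval partition of `G` (with recorded
headers) produced by the procedure starting from the entry node. -/
inductive Run (G : CFGraph α) : Set α → Set α → Set (α × Set α) → Prop
  | done (C : Set α) : Run G ∅ C ∅
  | step (H C : Set α) (h : α) (𝒮 : Set (α × Set α)) (hh : h ∈ H)
      (hrest : Run G ((H \ {h}) ∪ newHeaders G (C ∪ intervalOf G C h) (intervalOf G C h))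
        (C ∪ intervalOf G C h) 𝒮) :
      Run G H C (insert (h, intervalOf G C h) 𝒮)

/-- The graph `G′` obtained from `G` by replacing every node `v` by the nonempty
directed chain of fresh nodes `chain v` (with an edge from each node of the chain to
the next), replacing every edge `(u, v)` of `G` by an edge from the last node of
`chain u` to the first node of `chain v`, and taking the first node `e0` of
`chain G.entry` as the entry node. -/
def expand (G : CFGraph α) (chain : α → List β) (e0 : β) : CFGraph β where
  verts := {x | ∃ v ∈ G.verts, x ∈ chain v}
  Edge x y :=
    (∃ v ∈ G.verts, ∃ i, (chain v)[i]? = some x ∧ (chain v)[i + 1]? = some y) ∨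
    (∃ u ∈ G.verts, ∃ v ∈ G.verts, G.Edge u v ∧
      (chain u).getLast? = some x ∧ (chain v).head? = some y)
  entry := e0

end CFGraph

/-
The header-selection procedure on `G′` can be run in lockstep with the one on `G`:
when the procedure on `G` picks the header `h` and grows the interval `I`, the procedure on `G′`
picking the first node of `chain h` grows exactly `⋃_{v ∈ I} chain v`, because an inner node of a
chain has its predecessor in the chain as its only predecessor, while the first node of `chain v`
has as predecessors the last nodes of the chains of the predecessors of `v`. For the same reason
the new headers of `G′` are the first nodes of the chains of the new headers of `G`.

The procedure is confluent: processing two pending headers in either order leads to the same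
state, so all runs from a given state produce the same intervals, and the run on `G′` is the image
of the run on `G`. Finally, every interval the procedure produces is a genuine interval. Single
entry and the closed-path condition hold by construction. For maximality, a competing region `T`
with header `h` that leaves the computed interval contains an infinite backward walk avoiding `h`;
that walk passes through headers of the run infinitely often, and since there are finitely many
headers it repeats a node, closing a path inside `T` that avoids `h`.
-/

namespace CFGraph

variable {α β : Type*} {G : CFGraph α}

lemma IsCFG.mem_verts_left (hG : G.IsCFG) {u v : α} (huv : G.Edge u v) : u ∈ G.verts :=
  (hG.2.1 u v huv).1

lemma IsCFG.mem_verts_right (hG : G.IsCFG) {u v : α} (huv : G.Edge u v) : v ∈ G.verts :=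
  (hG.2.1 u v huv).2

lemma IsCFG.exists_pred (hG : G.IsCFG) {v : α} (hv : v ∈ G.verts) (hve : v ≠ G.entry) :
    ∃ u, G.Edge u v := by
  rcases (hG.2.2 v hv).cases_tail with rfl | ⟨u, -, hu⟩
  exacts [absurd rfl hve, ⟨u, hu⟩]

section Procedure

variable {H C T S : Set α} {h h' h₁ h₂ v : α}

def nextHeaders (G : CFGraph α) (H C : Set α) (h : α) : Set α :=
  (H \ {h}) ∪ newHeaders G (C ∪ intervalOf G C h) (intervalOf G C h)

/-- Invariant of the states `(H, C)` (pending headers, covered nodes) of a run. -/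
structure StateInv (G : CFGraph α) (H C : Set α) : Prop where
  header_mem : ∀ h ∈ H, h ∈ G.verts
  header_notMem : ∀ h ∈ H, h ∉ C
  header_entry_or_pred : ∀ h ∈ H, h = G.entry ∨ ∃ m ∈ C, G.Edge m h
  covered_subset : C ⊆ G.verts
  succ_mem : ∀ u ∈ C, ∀ v, G.Edge u v → v ∈ C ∪ H
  entry_mem : G.entry ∈ C ∨ (C = ∅ ∧ H = {G.entry})

lemma IntMem.mem_verts (hh : h ∈ G.verts) (hv : IntMem G C h v) : v ∈ G.verts := by
  cases hv with
  | head => exact hh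
  | step _ hv _ _ => exact hv

lemma IntMem.notMem (hh : h ∉ C) (hv : IntMem G C h v) : v ∉ C := by
  cases hv with
  | head => exact hh
  | step _ _ hvC _ => exact hvC

lemma IntMem.anti {C' : Set α} (hCC' : C ⊆ C') (hv : IntMem G C' h v) : IntMem G C h v := by
  induction hv with
  | head => exact .head
  | step v hv hvC _ ih => exact .step v hv (fun hc => hvC (hCC' hc)) ih

lemma exists_pred_not_intMem (hv : v ∈ G.verts) (hvC : v ∉ C) (hvI : ¬ IntMem G C h v) :
    ∃ u, G.Edge u v ∧ ¬ IntMem G C h u := by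
  by_contra! hpre
  exact hvI (.step v hv hvC hpre)

lemma StateInv.init (hG : G.IsCFG) : G.StateInv {G.entry} ∅ where
  header_mem := by rintro _ rfl; exact hG.1
  header_notMem := fun _ _ => Set.notMem_empty _
  header_entry_or_pred := fun _ hh => Or.inl hh
  covered_subset := Set.empty_subset _
  succ_mem := fun _ hu => absurd hu (Set.notMem_empty _)
  entry_mem := Or.inr ⟨rfl, rfl⟩

lemma StateInv.intervalOf_subset (hI : G.StateInv H C) (hh : h ∈ H) :
    intervalOf G C h ⊆ G.verts :=
  fun _ hv => IntMem.mem_verts (hI.header_mem h hh) hv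

lemma StateInv.eq_entry_of_entry_notMem (hI : G.StateInv H C) (hent : G.entry ∉ C)
    (hh : h ∈ H) : h = G.entry := by
  rcases hI.entry_mem with hC | ⟨-, rfl⟩
  exacts [absurd hC hent, hh]

lemma StateInv.eq_of_entry_notMem (hI : G.StateInv H C) (hent : G.entry ∉ C)
    (h1 : h₁ ∈ H) (h2 : h₂ ∈ H) : h₁ = h₂ :=
  (hI.eq_entry_of_entry_notMem hent h1).trans (hI.eq_entry_of_entry_notMem hent h2).symm

lemma StateInv.notMem_intervalOf (hI : G.StateInv H C) (hh : h ∈ H) (hh' : h' ∈ H)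
    (hne : h' ≠ h) : h' ∉ intervalOf G C h := by
  intro hmem
  cases hmem with
  | head => exact hne rfl
  | step _ _ hvC hpre =>
    rcases hI.header_entry_or_pred h' hh' with rfl | ⟨m, hm, hmh'⟩
    · exact hne (hI.eq_of_entry_notMem hvC hh' hh)
    · exact (hpre m hmh').notMem (hI.header_notMem h hh) hm

lemma StateInv.not_intMem_of_intMem (hG : G.IsCFG) (hI : G.StateInv H C) (h1 : h₁ ∈ H)
    (h2 : h₂ ∈ H) (hne : h₁ ≠ h₂) (hv : IntMem G C h₁ v) : ¬ IntMem G C h₂ v := by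
  induction hv with
  | head => exact hI.notMem_intervalOf h2 h1 hne
  | step v hv hvC hpre ih =>
    intro hv₂
    cases hv₂ with
    | head => exact hI.notMem_intervalOf h1 h2 hne.symm (IntMem.step _ hv hvC hpre)
    | step _ _ _ hpre₂ =>
      have hve : v ≠ G.entry := by
        rintro rfl
        exact hne (hI.eq_of_entry_notMem hvC h1 h2)
      obtain ⟨u, hu⟩ := hG.exists_pred hv hve
      exact ih u hu (hpre₂ u hu)

lemma StateInv.intervalOf_union (hG : G.IsCFG) (hI : G.StateInv H C) (h1 : h₁ ∈ H)
    (h2 : h₂ ∈ H) (hne : h₁ ≠ h₂) :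
    intervalOf G (C ∪ intervalOf G C h₁) h₂ = intervalOf G C h₂ := by
  refine Set.Subset.antisymm (fun v hv => IntMem.anti Set.subset_union_left hv) fun v hv => ?_
  induction hv with
  | head => exact .head
  | step v hv hvC hpre ih =>
    refine IntMem.step v hv ?_ ih
    rintro (hC | hI₁)
    exacts [hvC hC, hI.not_intMem_of_intMem hG h1 h2 hne hI₁ (IntMem.step v hv hvC hpre)]

lemma StateInv.next (hG : G.IsCFG) (hI : G.StateInv H C) (hh : h ∈ H) :
    G.StateInv (nextHeaders G H C h) (C ∪ intervalOf G C h) where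
  header_mem := by
    rintro h' (⟨hh', -⟩ | ⟨hv, -⟩)
    exacts [hI.header_mem h' hh', hv]
  header_notMem := by
    rintro h' (⟨hh', hne⟩ | ⟨-, hnc, -⟩)
    · rintro (hC | hI')
      exacts [hI.header_notMem h' hh' hC, hI.notMem_intervalOf hh hh' hne hI']
    · exact hnc
  header_entry_or_pred := by
    rintro h' (⟨hh', -⟩ | ⟨-, -, ⟨m, hm, hmI⟩, -⟩)
    · rcases hI.header_entry_or_pred h' hh' with rfl | ⟨m, hm, hmh⟩
      exacts [Or.inl rfl, Or.inr ⟨m, Or.inl hm, hmh⟩]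
    · exact Or.inr ⟨m, Or.inr hmI, hm⟩
  covered_subset := Set.union_subset hI.covered_subset (hI.intervalOf_subset hh)
  succ_mem := by
    rintro u (hu | hu) v huv
    · rcases hI.succ_mem u hu v huv with hv | hv
      · exact Or.inl (Or.inl hv)
      obtain rfl | hne := eq_or_ne v h
      exacts [Or.inl (Or.inr .head), Or.inr (Or.inl ⟨hv, hne⟩)]
    · by_cases hvc : v ∈ C ∪ intervalOf G C h
      · exact Or.inl hvc
      have hv := hG.mem_verts_right huv
      obtain ⟨m, hm, hmI⟩ := exists_pred_not_intMem hv (fun hC => hvc (Or.inl hC))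
        fun hvI => hvc (Or.inr hvI)
      exact Or.inr (Or.inr ⟨hv, hvc, ⟨u, huv, hu⟩, m, hm, hmI⟩)
  entry_mem := by
    rcases hI.entry_mem with hent | ⟨-, rfl⟩
    · exact Or.inl (Or.inl hent)
    · exact Or.inl (Or.inr (hh ▸ .head))

lemma StateInv.newHeaders_sdiff (hG : G.IsCFG) (hI : G.StateInv H C) (h1 : h₁ ∈ H)
    (h2 : h₂ ∈ H) (hne : h₁ ≠ h₂) :
    newHeaders G (C ∪ intervalOf G C h₁) (intervalOf G C h₁) \ {h₂} =
      newHeaders G (C ∪ intervalOf G C h₁ ∪ intervalOf G C h₂) (intervalOf G C h₁) := by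
  ext v
  constructor
  · rintro ⟨⟨hv, hnc, ⟨m, hm, hmI⟩, hout⟩, hvh₂⟩
    refine ⟨hv, ?_, ⟨m, hm, hmI⟩, hout⟩
    rintro (hc | hv₂)
    · exact hnc hc
    cases hv₂ with
    | head => exact hvh₂ rfl
    | step _ _ _ hpre₂ => exact hI.not_intMem_of_intMem hG h1 h2 hne hmI (hpre₂ m hm)
  · rintro ⟨hv, hnc, hin, hout⟩
    refine ⟨⟨hv, fun hc => hnc (Or.inl hc), hin, hout⟩, ?_⟩
    rintro rfl
    exact hnc (Or.inr .head)

lemma StateInv.nextHeaders_nextHeaders (hG : G.IsCFG) (hI : G.StateInv H C) (h1 : h₁ ∈ H)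
    (h2 : h₂ ∈ H) (hne : h₁ ≠ h₂) :
    nextHeaders G (nextHeaders G H C h₁) (C ∪ intervalOf G C h₁) h₂ =
      (H \ {h₁}) \ {h₂} ∪
        (newHeaders G (C ∪ intervalOf G C h₁ ∪ intervalOf G C h₂) (intervalOf G C h₁) ∪
          newHeaders G (C ∪ intervalOf G C h₁ ∪ intervalOf G C h₂) (intervalOf G C h₂)) := by
  rw [nextHeaders, nextHeaders, hI.intervalOf_union hG h1 h2 hne, Set.union_sdiff_distrib,
    hI.newHeaders_sdiff hG h1 h2 hne, Set.union_assoc]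

/-- The diamond property of the procedure. -/
lemma StateInv.nextHeaders_comm (hG : G.IsCFG) (hI : G.StateInv H C) (h1 : h₁ ∈ H)
    (h2 : h₂ ∈ H) (hne : h₁ ≠ h₂) :
    nextHeaders G (nextHeaders G H C h₁) (C ∪ intervalOf G C h₁) h₂ =
      nextHeaders G (nextHeaders G H C h₂) (C ∪ intervalOf G C h₂) h₁ := by
  rw [hI.nextHeaders_nextHeaders hG h1 h2 hne, hI.nextHeaders_nextHeaders hG h2 h1 hne.symm,
    Set.sdiff_sdiff_comm, Set.union_right_comm C, Set.union_comm (newHeaders G _ _)]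

lemma IntervalProp.not_isEntry (hT : G.IntervalProp h T) (hvh : v ≠ h) : ¬ G.IsEntry T v :=
  fun he => hvh ((hT.2.2.1 v).1 he)

lemma IntervalProp.ne_entry (hT : G.IntervalProp h T) (hvT : v ∈ T) (hvh : v ≠ h) :
    v ≠ G.entry :=
  fun he => hT.not_isEntry hvh ⟨hvT, Or.inl he⟩

lemma IntervalProp.pred_mem (hG : G.IsCFG) (hT : G.IntervalProp h T) (hvT : v ∈ T)
    (hvh : v ≠ h) {u : α} (huv : G.Edge u v) : u ∈ T := by
  by_contra huT
  exact hT.not_isEntry hvh ⟨hvT, Or.inr ⟨u, hG.mem_verts_left huv, huT, huv⟩⟩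

lemma StateInv.disjoint_intervalOf (hG : G.IsCFG) (hI : G.StateInv H C) (hh' : h' ∈ H)
    (hT : G.IntervalProp h T) (hTC : Disjoint T C) (hh : h ∉ intervalOf G C h') :
    Disjoint T (intervalOf G C h') := by
  refine Set.disjoint_right.2 fun v hv => ?_
  induction hv with
  | head =>
    intro hh'T
    have hne : h' ≠ h := fun heq => hh (heq ▸ IntMem.head)
    refine hT.not_isEntry hne ⟨hh'T, ?_⟩
    rcases hI.header_entry_or_pred h' hh' with he | ⟨m, hm, hmh'⟩
    exacts [Or.inl he, Or.inr ⟨m, hI.covered_subset hm, Set.disjoint_right.1 hTC hm, hmh'⟩]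
  | step v hv hvC hpre ih =>
    intro hvT
    have hvh : v ≠ h := by
      rintro rfl
      exact hh (IntMem.step _ hv hvC hpre)
    obtain ⟨u, hu⟩ := hG.exists_pred hv (hT.ne_entry hvT hvh)
    exact ih u hu (hT.pred_mem hG hvT hvh hu)

variable {𝒮 𝒮₁ 𝒮₂ : Set (α × Set α)}

lemma Run.finite (hrun : Run G H C 𝒮) : 𝒮.Finite := by
  induction hrun with
  | done => exact Set.finite_empty
  | step _ _ _ _ _ _ ih => exact ih.insert _

lemma Run.fst_notMem (hG : G.IsCFG) (hrun : Run G H C 𝒮) (hI : G.StateInv H C) :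
    ∀ p ∈ 𝒮, p.1 ∉ C := by
  induction hrun with
  | done => exact fun p hp => absurd hp (Set.notMem_empty p)
  | step H C h 𝒮 hh _ ih =>
    rintro p (rfl | hp)
    · exact hI.header_notMem h hh
    · exact fun hC => ih (hI.next hG hh) p hp (Or.inl hC)

lemma Run.exists_state (hG : G.IsCFG) (hrun : Run G H C 𝒮) (hI : G.StateInv H C) :
    ∀ {h S}, (h, S) ∈ 𝒮 → ∃ H₁ C₁, G.StateInv H₁ C₁ ∧ h ∈ H₁ ∧ S = intervalOf G C₁ h ∧
      ∀ T, G.IntervalProp h T → Disjoint T C → Disjoint T C₁ := by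
  induction hrun with
  | done => exact fun hp => absurd hp (Set.notMem_empty _)
  | step H C h' 𝒮 hh' hrest ih =>
    rintro h S (heq | hp)
    · obtain ⟨rfl, rfl⟩ := Prod.mk.inj heq
      exact ⟨H, C, hI, hh', rfl, fun _ _ hTC => hTC⟩
    obtain ⟨H₁, C₁, hI₁, hh₁, hS, hdisj⟩ := ih (hI.next hG hh') hp
    refine ⟨H₁, C₁, hI₁, hh₁, hS, fun T hT hTC => hdisj T hT ?_⟩
    refine Set.disjoint_union_right.2 ⟨hTC, hI.disjoint_intervalOf hG hh' hT hTC fun hhI => ?_⟩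
    exact hrest.fst_notMem hG (hI.next hG hh') _ hp (Or.inr hhI)

lemma Run.covers (hG : G.IsCFG) (hrun : Run G H C 𝒮) (hI : G.StateInv H C) :
    ∀ v ∈ G.verts, v ∈ C ∨ ∃ p ∈ 𝒮, v ∈ p.2 := by
  induction hrun with
  | done C =>
    have hent : G.entry ∈ C :=
      hI.entry_mem.resolve_right fun ⟨_, hH⟩ => Set.singleton_ne_empty _ hH.symm
    intro v hv
    left
    have hreach := hG.2.2 v hv
    clear hv
    induction hreach with
    | refl => exact hent
    | tail _ huv ih => exact (hI.succ_mem _ ih _ huv).resolve_right (Set.notMem_empty _)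
  | step H C h 𝒮 hh _ ih =>
    intro v hv
    rcases ih (hI.next hG hh) v hv with (hC | hvI) | ⟨p, hp, hvp⟩
    · exact Or.inl hC
    · exact Or.inr ⟨_, Set.mem_insert _ _, hvI⟩
    · exact Or.inr ⟨p, Set.mem_insert_of_mem _ hp, hvp⟩

lemma Run.mem_and_run_next (hG : G.IsCFG) (hrun : Run G H C 𝒮) (hI : G.StateInv H C)
    (hh : h ∈ H) :
    (h, intervalOf G C h) ∈ 𝒮 ∧
      Run G (nextHeaders G H C h) (C ∪ intervalOf G C h) (𝒮 \ {(h, intervalOf G C h)}) := by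
  induction hrun generalizing h with
  | done => exact absurd hh (Set.notMem_empty h)
  | step H C h' 𝒮 hh' hrest ih =>
    obtain rfl | hne := eq_or_ne h h'
    · have hnot : (h, intervalOf G C h) ∉ 𝒮 := fun hmem =>
        hrest.fst_notMem hG (hI.next hG hh) _ hmem (Or.inr .head)
      exact ⟨Set.mem_insert _ _, by rwa [Set.insert_sdiff_self_of_notMem hnot]⟩
    have hI' : intervalOf G (C ∪ intervalOf G C h') h = intervalOf G C h :=
      hI.intervalOf_union hG hh' hh hne.symm
    obtain ⟨hmem, hrun'⟩ := ih (hI.next hG hh') (Or.inl ⟨hh, hne⟩)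
    rw [hI'] at hmem hrun'
    refine ⟨Set.mem_insert_of_mem _ hmem, ?_⟩
    have hstep := Run.step (nextHeaders G H C h) (C ∪ intervalOf G C h) h'
      (𝒮 \ {(h, intervalOf G C h)}) (Or.inl ⟨hh', hne.symm⟩) (by
        show Run G (nextHeaders G (nextHeaders G H C h) (C ∪ intervalOf G C h) h') _ _
        rw [hI.nextHeaders_comm hG hh hh' hne, hI.intervalOf_union hG hh hh' hne,
          Set.union_right_comm]
        exact hrun')
    rw [hI.intervalOf_union hG hh hh' hne] at hstep
    have hnot : (h', intervalOf G C h') ∉ ({(h, intervalOf G C h)} : Set (α × Set α)) :=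
      fun heq => hne (Prod.mk.inj heq).1.symm
    rwa [Set.insert_sdiff_of_notMem _ hnot]

lemma Run.unique (hG : G.IsCFG) (hrun₁ : Run G H C 𝒮₁) (hI : G.StateInv H C)
    (hrun₂ : Run G H C 𝒮₂) : 𝒮₁ = 𝒮₂ := by
  induction hrun₁ generalizing 𝒮₂ with
  | done =>
    cases hrun₂ with
    | done => rfl
    | step _ _ h _ hh _ => exact absurd hh (Set.notMem_empty h)
  | step H C h 𝒮 hh _ ih =>
    obtain ⟨hmem, hrun₂'⟩ := hrun₂.mem_and_run_next hG hI hh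
    rw [ih (hI.next hG hh) hrun₂', Set.insert_sdiff_singleton, Set.insert_eq_of_mem hmem]

lemma IsClosedPath.exists_pred_mem {p : List α} (hp : G.IsClosedPath p) (hv : v ∈ p) :
    ∃ u ∈ p, G.Edge u v := by
  obtain ⟨hchain, hlen, hcl⟩ := hp
  obtain ⟨i, hi, rfl⟩ := List.mem_iff_getElem.1 hv
  -- the first node is also the last one, so it has a predecessor as well
  obtain ⟨j, hj, hj0, hji⟩ : ∃ j, ∃ hj : j < p.length, 0 < j ∧ p[j] = p[i] := by
    rcases Nat.eq_zero_or_pos i with rfl | hi0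
    · refine ⟨p.length - 1, by omega, by omega, ?_⟩
      rw [List.head?_eq_getElem?, List.getLast?_eq_getElem?, List.getElem?_eq_getElem hi,
        List.getElem?_eq_getElem (by omega)] at hcl
      exact (Option.some_injective _ hcl).symm
    · exact ⟨i, hi, hi0, rfl⟩
  obtain ⟨k, rfl⟩ : ∃ k, j = k + 1 := ⟨j - 1, by omega⟩
  exact ⟨p[k], List.getElem_mem _, hji ▸ List.isChain_iff_getElem.1 hchain k hj⟩

lemma IntMem.notMem_of_isClosedPath {p : List α} (hp : G.IsClosedPath p) (hhp : h ∉ p)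
    (hv : IntMem G C h v) : v ∉ p := by
  induction hv with
  | head => exact hhp
  | step v _ _ _ ih =>
    intro hvp
    obtain ⟨u, hup, huv⟩ := hp.exists_pred_mem hvp
    exact ih u huv hup

lemma StateInv.intervalProp (hI : G.StateInv H C) (hh : h ∈ H) :
    G.IntervalProp h (intervalOf G C h) := by
  have hhC := hI.header_notMem h hh
  refine ⟨hI.intervalOf_subset hh, .head, fun e => ⟨?_, ?_⟩, fun p hp hpI => ?_⟩
  · rintro ⟨heI, rfl | ⟨u, -, huI, hue⟩⟩
    · exact (hI.eq_entry_of_entry_notMem (IntMem.notMem hhC heI) hh).symm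
    · cases heI with
      | head => rfl
      | step _ _ _ hpre => exact absurd (hpre u hue) huI
  · rintro rfl
    refine ⟨.head, ?_⟩
    rcases hI.header_entry_or_pred e hh with he | ⟨m, hm, hme⟩
    exacts [Or.inl he, Or.inr ⟨m, hI.covered_subset hm, fun hmI => IntMem.notMem hhC hmI hm, hme⟩]
  · have hne : p ≠ [] := List.ne_nil_of_length_pos (by have := hp.2.1; omega)
    by_contra hhp
    exact IntMem.notMem_of_isClosedPath hp hhp (hpI _ (List.head_mem hne)) (List.head_mem hne)

lemma exists_backward_walk {r : α → α → Prop} {D : Set α} (hD : ∀ v ∈ D, ∃ u ∈ D, r u v)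
    (hne : D.Nonempty) : ∃ w : ℕ → α, ∀ n, w n ∈ D ∧ r (w (n + 1)) (w n) := by
  choose g hgD hg using hD
  let f : D → D := fun v => ⟨g v v.2, hgD v v.2⟩
  refine ⟨fun n => (f^[n] ⟨hne.some, hne.some_mem⟩ : α), fun n => ⟨(f^[n] _).2, ?_⟩⟩
  dsimp only
  rw [Function.iterate_succ_apply']
  exact hg _ _

lemma isClosedPath_of_backward_walk {w : ℕ → α} (hw : ∀ n, G.Edge (w (n + 1)) (w n))
    {i j : ℕ} (hij : i < j) (heq : w i = w j) :
    G.IsClosedPath (List.ofFn fun t : Fin (j - i + 1) => w (j - t)) := by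
  refine ⟨List.isChain_iff_getElem.2 fun t ht => ?_, by simp; omega, ?_⟩
  · simp only [List.getElem_ofFn]
    simp only [List.length_ofFn] at ht
    obtain ⟨s, hs⟩ : ∃ s, j - t = s + 1 := ⟨j - (t + 1), by omega⟩
    rw [hs, show j - (t + 1) = s by omega]
    exact hw s
  · rw [List.head?_eq_getElem?, List.getLast?_eq_getElem?, List.getElem?_ofFn,
      List.getElem?_ofFn]
    simp only [List.length_ofFn, Nat.add_sub_cancel]
    simp [show j - (j - i) = i by omega, heq]

lemma IntMem.exists_backward_walk_eq {w : ℕ → α} (hw : ∀ n, G.Edge (w (n + 1)) (w n))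
    {i : ℕ} (hi : IntMem G C h (w i)) : ∃ j ≥ i, w j = h := by
  generalize hv : w i = v at hi
  induction hi generalizing i with
  | head => exact ⟨i, le_rfl, hv⟩
  | step v _ _ _ ih =>
    obtain ⟨j, hj, hjh⟩ := ih (w (i + 1)) (hv ▸ hw i) rfl
    exact ⟨j, by omega, hjh⟩

lemma IntervalProp.exists_pred_mem_sdiff (hG : G.IsCFG) (hT : G.IntervalProp h T)
    (hTC : Disjoint T C) : ∀ v ∈ T \ intervalOf G C h, ∃ u ∈ T \ intervalOf G C h, G.Edge u v := by
  rintro v ⟨hvT, hvS⟩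
  have hvh : v ≠ h := by
    rintro rfl
    exact hvS .head
  obtain ⟨u, huv, huS⟩ := exists_pred_not_intMem (hT.1 hvT) (Set.disjoint_left.1 hTC hvT) hvS
  exact ⟨u, ⟨hT.pred_mem hG hvT hvh huv, huS⟩, huv⟩

lemma IntervalProp.injective_of_backward_walk (hT : G.IntervalProp h T) {w : ℕ → α}
    (hw : ∀ n, G.Edge (w (n + 1)) (w n)) (hwT : ∀ n, w n ∈ T) (hwh : ∀ n, w n ≠ h) :
    w.Injective := by
  have hne : ∀ i j, i < j → w i ≠ w j := by
    intro i j hij heq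
    obtain ⟨t, ht⟩ := List.mem_ofFn.1 <| hT.2.2.2 _ (isClosedPath_of_backward_walk hw hij heq)
      fun x hx => by
        obtain ⟨t, rfl⟩ := List.mem_ofFn.1 hx
        exact hwT _
    exact hwh _ ht
  intro i j heq
  by_contra hij
  rcases lt_or_gt_of_ne hij with hij | hij
  exacts [hne i j hij heq, hne j i hij heq.symm]

lemma Run.subset_of_intervalProp (hG : G.IsCFG) (hrun : Run G {G.entry} ∅ 𝒮)
    (hp : (h, S) ∈ 𝒮) (hT : G.IntervalProp h T) : T ⊆ S := by
  obtain ⟨H₁, C₁, -, -, rfl, hdisj⟩ := hrun.exists_state hG (.init hG) hp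
  by_contra hTS
  obtain ⟨w, hw⟩ :=
    exists_backward_walk (hT.exists_pred_mem_sdiff hG (hdisj T hT (Set.disjoint_empty T)))
      (Set.nonempty_of_not_subset hTS)
  have hwE : ∀ n, G.Edge (w (n + 1)) (w n) := fun n => (hw n).2
  have hinj : w.Injective := hT.injective_of_backward_walk hwE (fun n => (hw n).1.1)
    fun n hn => (hw n).1.2 (hn ▸ IntMem.head)
  have hvisit : ∀ i, ∃ j ∈ w ⁻¹' (Prod.fst '' 𝒮), i < j := by
    intro i
    obtain ⟨⟨h₂, S₂⟩, hp₂, hwS₂⟩ :=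
      (hrun.covers hG (.init hG) _ (hT.1 (hw (i + 1)).1.1)).resolve_left (Set.notMem_empty _)
    obtain ⟨-, C₂, -, -, rfl, -⟩ := hrun.exists_state hG (.init hG) hp₂
    obtain ⟨j, hij, hj⟩ := IntMem.exists_backward_walk_eq hwE hwS₂
    exact ⟨j, ⟨_, hp₂, hj.symm⟩, by omega⟩
  have hfin : (w ⁻¹' (Prod.fst '' 𝒮)).Finite :=
    Set.Finite.of_finite_image ((hrun.finite.image _).subset (Set.image_preimage_subset _ _))
      hinj.injOn
  exact Set.infinite_of_forall_exists_gt hvisit hfin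

lemma Run.isInterval (hG : G.IsCFG) (hrun : Run G {G.entry} ∅ 𝒮) (hp : (h, S) ∈ 𝒮) :
    G.IsInterval h S := by
  obtain ⟨H₁, C₁, hI₁, hh₁, rfl, -⟩ := hrun.exists_state hG (.init hG) hp
  exact ⟨hI₁.intervalProp hh₁, fun T hT hST => (hrun.subset_of_intervalProp hG hp hT).antisymm hST⟩

end Procedure

section Expand

variable {chain : α → List β} {e0 : β} {H C S : Set α} {h v w : α} {e x y : β}

structure FreshChains (G : CFGraph α) (chain : α → List β) : Prop where
  ne_nil : ∀ v ∈ G.verts, chain v ≠ []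
  nodup : ∀ v ∈ G.verts, (chain v).Nodup
  disjoint : ∀ u ∈ G.verts, ∀ v ∈ G.verts, u ≠ v → ∀ x ∈ chain u, x ∉ chain v

def chainSet (chain : α → List β) (S : Set α) : Set β := {x | ∃ v ∈ S, x ∈ chain v}

def headSet (chain : α → List β) (S : Set α) : Set β := {x | ∃ v ∈ S, (chain v).head? = some x}

def expandPairs (chain : α → List β) (𝒮 : Set (α × Set α)) : Set (β × Set β) :=
  {q | ∃ p ∈ 𝒮, (chain p.1).head? = some q.1 ∧ q.2 = chainSet chain p.2}

lemma chainSet_empty : chainSet chain ∅ = ∅ := by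
  simp [chainSet]

lemma chainSet_union {T : Set α} :
    chainSet chain (S ∪ T) = chainSet chain S ∪ chainSet chain T := by
  ext x
  simp only [chainSet, Set.mem_union, Set.mem_ofPred_eq, or_and_right, exists_or]

lemma headSet_empty : headSet chain ∅ = ∅ := by
  simp [headSet]

lemma headSet_union {T : Set α} :
    headSet chain (S ∪ T) = headSet chain S ∪ headSet chain T := by
  ext x
  simp only [headSet, Set.mem_union, Set.mem_ofPred_eq, or_and_right, exists_or]

lemma headSet_singleton (he : (chain h).head? = some e) : headSet chain {h} = {e} := by
  ext x
  simp [headSet, he, eq_comm]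

lemma expandPairs_empty : expandPairs chain ∅ = ∅ := by
  simp [expandPairs]

lemma expandPairs_insert {𝒮 : Set (α × Set α)} (he : (chain h).head? = some e) :
    expandPairs chain (insert (h, S) 𝒮) = insert (e, chainSet chain S) (expandPairs chain 𝒮) := by
  ext ⟨x, X⟩
  simp only [expandPairs, Set.mem_insert_iff, Set.mem_ofPred_eq, exists_eq_or_imp, he,
    Option.some.injEq, Prod.mk.injEq, eq_comm (a := e)]

lemma expand_reflTransGen_of_mem (hv : v ∈ G.verts) (he : (chain v).head? = some e)
    (hx : x ∈ chain v) : Relation.ReflTransGen (expand G chain e0).Edge e x := by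
  obtain ⟨i, hi, rfl⟩ := List.mem_iff_getElem.1 hx
  induction i with
  | zero =>
    rw [List.head?_eq_getElem?, List.getElem?_eq_getElem hi, Option.some.injEq] at he
    exact he ▸ .refl
  | succ i ih =>
    exact (ih (by omega) (List.getElem_mem _)).tail
      (Or.inl ⟨v, hv, i, List.getElem?_eq_getElem _, List.getElem?_eq_getElem hi⟩)

namespace FreshChains

variable (hc : G.FreshChains chain)
include hc

lemma exists_head (hv : v ∈ G.verts) : ∃ e, (chain v).head? = some e :=
  Option.ne_none_iff_exists'.1 (mt List.head?_eq_none_iff.1 (hc.ne_nil v hv))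

lemma exists_getLast (hv : v ∈ G.verts) : ∃ y, (chain v).getLast? = some y :=
  Option.ne_none_iff_exists'.1 (mt List.getLast?_eq_none_iff.1 (hc.ne_nil v hv))

lemma eq_of_mem (hv : v ∈ G.verts) (hw : w ∈ G.verts) (hxv : x ∈ chain v)
    (hxw : x ∈ chain w) : v = w :=
  by_contra fun hne => hc.disjoint v hv w hw hne x hxv hxw

lemma mem_chainSet_iff (hS : S ⊆ G.verts) (hv : v ∈ G.verts) (hx : x ∈ chain v) :
    x ∈ chainSet chain S ↔ v ∈ S :=
  ⟨fun ⟨_, hwS, hxw⟩ => hc.eq_of_mem hv (hS hwS) hx hxw ▸ hwS, fun hvS => ⟨v, hvS, hx⟩⟩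

lemma eq_and_eq_of_getElem? {i j : ℕ} (hv : v ∈ G.verts) (hw : w ∈ G.verts)
    (hxv : (chain v)[i]? = some x) (hxw : (chain w)[j]? = some x) : v = w ∧ i = j := by
  obtain rfl := hc.eq_of_mem hv hw (List.mem_of_getElem? hxv) (List.mem_of_getElem? hxw)
  exact ⟨rfl, (List.getElem?_inj (List.getElem?_eq_some_iff.1 hxv).1 (hc.nodup v hv)).1
    (hxv.trans hxw.symm)⟩

lemma expand_edge_iff_of_getElem?_succ {i : ℕ} (hv : v ∈ G.verts)
    (hx : (chain v)[i + 1]? = some x) :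
    (expand G chain e0).Edge y x ↔ (chain v)[i]? = some y := by
  refine ⟨?_, fun hy => Or.inl ⟨v, hv, i, hy, hx⟩⟩
  rintro (⟨w, hw, j, hy, hxw⟩ | ⟨-, -, w, hw, -, -, hxw⟩)
  · obtain ⟨rfl, hji⟩ := hc.eq_and_eq_of_getElem? hw hv hxw hx
    rwa [← Nat.succ_inj.1 hji]
  · rw [List.head?_eq_getElem?] at hxw
    exact absurd (hc.eq_and_eq_of_getElem? hw hv hxw hx).2 (by omega)

lemma expand_edge_iff_of_head? (hv : v ∈ G.verts) (hx : (chain v).head? = some x) :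
    (expand G chain e0).Edge y x ↔
      ∃ u ∈ G.verts, G.Edge u v ∧ (chain u).getLast? = some y := by
  refine ⟨?_, fun ⟨u, hu, huv, hy⟩ => Or.inr ⟨u, hu, v, hv, huv, hy, hx⟩⟩
  rw [List.head?_eq_getElem?] at hx
  rintro (⟨w, hw, j, -, hxw⟩ | ⟨u, hu, w, hw, huw, hy, hxw⟩)
  · exact absurd (hc.eq_and_eq_of_getElem? hw hv hxw hx).2 (by omega)
  · rw [List.head?_eq_getElem?] at hxw
    obtain ⟨rfl, -⟩ := hc.eq_and_eq_of_getElem? hw hv hxw hx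
    exact ⟨u, hu, huw, hy⟩

lemma headSet_sdiff_singleton (hH : H ⊆ G.verts) (hh : h ∈ H)
    (he : (chain h).head? = some e) : headSet chain (H \ {h}) = headSet chain H \ {e} := by
  ext x
  constructor
  · rintro ⟨v, ⟨hvH, hvh⟩, hx⟩
    refine ⟨⟨v, hvH, hx⟩, fun hxe => hvh ?_⟩
    rw [Set.mem_singleton_iff] at hxe ⊢
    subst hxe
    exact hc.eq_of_mem (hH hvH) (hH hh) (List.mem_of_mem_head? hx) (List.mem_of_mem_head? he)
  · rintro ⟨⟨v, hvH, hx⟩, hxe⟩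
    refine ⟨v, ⟨hvH, fun hvh => hxe ?_⟩, hx⟩
    rw [Set.mem_singleton_iff] at hvh ⊢
    subst hvh
    exact Option.some_injective _ (hx.symm.trans he)

lemma expand_reflTransGen_head (hG : G.IsCFG) (he0 : (chain G.entry).head? = some e0)
    (hv : v ∈ G.verts) (he : (chain v).head? = some e) :
    Relation.ReflTransGen (expand G chain e0).Edge e0 e := by
  have hreach := hG.2.2 v hv
  clear hv
  induction hreach generalizing e with
  | refl => exact Option.some_injective _ (he0.symm.trans he) ▸ .refl
  | @tail u w _ huw ih =>
    have hu := hG.mem_verts_left huw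
    obtain ⟨eu, heu⟩ := hc.exists_head hu
    obtain ⟨y, hy⟩ := hc.exists_getLast hu
    exact ((ih heu).trans (expand_reflTransGen_of_mem hu heu (List.mem_of_mem_getLast? hy))).tail
      (Or.inr ⟨u, hu, w, hG.mem_verts_right huw, huw, hy, he⟩)

lemma expand_isCFG (hG : G.IsCFG) (he0 : (chain G.entry).head? = some e0) :
    (expand G chain e0).IsCFG := by
  refine ⟨⟨G.entry, hG.1, List.mem_of_mem_head? he0⟩, ?_, ?_⟩
  · rintro x y (⟨v, hv, i, hx, hy⟩ | ⟨u, hu, v, hv, -, hx, hy⟩)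
    · exact ⟨⟨v, hv, List.mem_of_getElem? hx⟩, v, hv, List.mem_of_getElem? hy⟩
    · exact ⟨⟨u, hu, List.mem_of_mem_getLast? hx⟩, v, hv, List.mem_of_mem_head? hy⟩
  · rintro x ⟨v, hv, hxv⟩
    obtain ⟨e, he⟩ := hc.exists_head hv
    exact (hc.expand_reflTransGen_head hG he0 hv he).trans (expand_reflTransGen_of_mem hv he hxv)

lemma intMem_expand_of_head (hC : C ⊆ G.verts) (hv : v ∈ G.verts) (hvC : v ∉ C)
    (hhead : ∀ x, (chain v).head? = some x →
      IntMem (expand G chain e0) (chainSet chain C) e x) :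
    ∀ x ∈ chain v, IntMem (expand G chain e0) (chainSet chain C) e x := by
  suffices ∀ (i : ℕ) x, (chain v)[i]? = some x →
      IntMem (expand G chain e0) (chainSet chain C) e x by
    intro x hx
    obtain ⟨i, hi, rfl⟩ := List.mem_iff_getElem.1 hx
    exact this i _ (List.getElem?_eq_getElem hi)
  intro i
  induction i with
  | zero => exact fun x hx => hhead x (by rwa [List.head?_eq_getElem?])
  | succ i ih =>
    intro x hx
    have hxv := List.mem_of_getElem? hx
    refine IntMem.step x ⟨v, hv, hxv⟩ (mt (hc.mem_chainSet_iff hC hv hxv).1 hvC) fun y hy => ?_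
    exact ih y ((hc.expand_edge_iff_of_getElem?_succ hv hx).1 hy)

lemma chainSet_intervalOf_subset (hI : G.StateInv H C) (hh : h ∈ H)
    (he : (chain h).head? = some e) :
    chainSet chain (intervalOf G C h) ⊆
      intervalOf (expand G chain e0) (chainSet chain C) e := by
  have hC := hI.covered_subset
  rintro x ⟨v, hv, hxv⟩
  induction hv generalizing x with
  | head =>
    refine hc.intMem_expand_of_head hC (hI.header_mem h hh) (hI.header_notMem h hh)
      (fun x hx => ?_) x hxv
    rw [he, Option.some.injEq] at hx
    exact hx ▸ .head
  | step v hv hvC _ ih =>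
    refine hc.intMem_expand_of_head hC hv hvC (fun x hx => ?_) x hxv
    have hxv := List.mem_of_mem_head? hx
    refine IntMem.step x ⟨v, hv, hxv⟩ (mt (hc.mem_chainSet_iff hC hv hxv).1 hvC) fun y hy => ?_
    obtain ⟨u, -, huv, hy⟩ := (hc.expand_edge_iff_of_head? hv hx).1 hy
    exact ih u huv (List.mem_of_mem_getLast? hy)

lemma intervalOf_expand_subset (hG : G.IsCFG) (hI : G.StateInv H C) (hh : h ∈ H)
    (he : (chain h).head? = some e) :
    intervalOf (expand G chain e0) (chainSet chain C) e ⊆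
      chainSet chain (intervalOf G C h) := by
  have hIv := hI.intervalOf_subset hh
  intro x hx
  induction hx with
  | head => exact ⟨h, .head, List.mem_of_mem_head? he⟩
  | step x hx hxC _ ih =>
    obtain ⟨w, hw, hxw⟩ := hx
    obtain ⟨i, hi, rfl⟩ := List.mem_iff_getElem.1 hxw
    have hx : (chain w)[i]? = some (chain w)[i] := List.getElem?_eq_getElem hi
    refine ⟨w, ?_, hxw⟩
    rcases i with _ | i
    · obtain rfl | hwh := eq_or_ne w h
      · exact .head
      refine IntMem.step w hw (fun hwC => hxC ⟨w, hwC, hxw⟩) fun u huw => ?_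
      have hu := hG.mem_verts_left huw
      obtain ⟨y, hy⟩ := hc.exists_getLast hu
      have hyx := (hc.expand_edge_iff_of_head? (e0 := e0) hw (by rwa [List.head?_eq_getElem?])).2
        ⟨u, hu, huw, hy⟩
      exact (hc.mem_chainSet_iff hIv hu (List.mem_of_mem_getLast? hy)).1 (ih y hyx)
    · have hyx := (hc.expand_edge_iff_of_getElem?_succ (e0 := e0) hw hx).2
        (List.getElem?_eq_getElem (by omega) : (chain w)[i]? = some (chain w)[i])
      exact (hc.mem_chainSet_iff hIv hw (List.getElem_mem _)).1 (ih _ hyx)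

lemma intervalOf_expand (hG : G.IsCFG) (hI : G.StateInv H C) (hh : h ∈ H)
    (he : (chain h).head? = some e) :
    intervalOf (expand G chain e0) (chainSet chain C) e = chainSet chain (intervalOf G C h) :=
  (hc.intervalOf_expand_subset hG hI hh he).antisymm (hc.chainSet_intervalOf_subset hI hh he)

lemma newHeaders_expand (hG : G.IsCFG) (hI : G.StateInv H C) (hh : h ∈ H) :
    newHeaders (expand G chain e0) (chainSet chain (C ∪ intervalOf G C h))
        (chainSet chain (intervalOf G C h)) =
      headSet chain (newHeaders G (C ∪ intervalOf G C h) (intervalOf G C h)) := by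
  have hIv := hI.intervalOf_subset hh
  have hCIv := Set.union_subset hI.covered_subset hIv
  ext x
  constructor
  · rintro ⟨⟨w, hw, hxw⟩, hxCI, ⟨y₁, hy₁x, hy₁I⟩, y₂, hy₂x, hy₂I⟩
    obtain ⟨i, hi, rfl⟩ := List.mem_iff_getElem.1 hxw
    have hx : (chain w)[i]? = some (chain w)[i] := List.getElem?_eq_getElem hi
    rcases i with _ | i
    · have hx₀ : (chain w).head? = some (chain w)[0] := by rwa [List.head?_eq_getElem?]
      obtain ⟨u₁, hu₁, hu₁w, hy₁⟩ := (hc.expand_edge_iff_of_head? hw hx₀).1 hy₁x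
      obtain ⟨u₂, hu₂, hu₂w, hy₂⟩ := (hc.expand_edge_iff_of_head? hw hx₀).1 hy₂x
      refine ⟨w, ⟨hw, mt (hc.mem_chainSet_iff hCIv hw hxw).2 hxCI, ⟨u₁, hu₁w, ?_⟩, u₂, hu₂w, ?_⟩,
        hx₀⟩
      · exact (hc.mem_chainSet_iff hIv hu₁ (List.mem_of_mem_getLast? hy₁)).1 hy₁I
      · exact mt (hc.mem_chainSet_iff hIv hu₂ (List.mem_of_mem_getLast? hy₂)).2 hy₂I
    · -- an inner node of a chain has a single predecessor
      have hy₁ := (hc.expand_edge_iff_of_getElem?_succ hw hx).1 hy₁x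
      have hy₂ := (hc.expand_edge_iff_of_getElem?_succ hw hx).1 hy₂x
      exact absurd (Option.some_injective _ (hy₁.symm.trans hy₂) ▸ hy₁I) hy₂I
  · rintro ⟨w, ⟨hw, hwCI, ⟨u₁, hu₁w, hu₁I⟩, u₂, hu₂w, hu₂I⟩, hx⟩
    have hxw := List.mem_of_mem_head? hx
    have hu₁ := hG.mem_verts_left hu₁w
    have hu₂ := hG.mem_verts_left hu₂w
    obtain ⟨y₁, hy₁⟩ := hc.exists_getLast hu₁
    obtain ⟨y₂, hy₂⟩ := hc.exists_getLast hu₂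
    refine ⟨⟨w, hw, hxw⟩, mt (hc.mem_chainSet_iff hCIv hw hxw).1 hwCI,
      ⟨y₁, (hc.expand_edge_iff_of_head? hw hx).2 ⟨u₁, hu₁, hu₁w, hy₁⟩, ?_⟩,
      y₂, (hc.expand_edge_iff_of_head? hw hx).2 ⟨u₂, hu₂, hu₂w, hy₂⟩, ?_⟩
    · exact (hc.mem_chainSet_iff hIv hu₁ (List.mem_of_mem_getLast? hy₁)).2 hu₁I
    · exact mt (hc.mem_chainSet_iff hIv hu₂ (List.mem_of_mem_getLast? hy₂)).1 hu₂I

lemma nextHeaders_expand (hG : G.IsCFG) (hI : G.StateInv H C) (hh : h ∈ H)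
    (he : (chain h).head? = some e) :
    nextHeaders (expand G chain e0) (headSet chain H) (chainSet chain C) e =
      headSet chain (nextHeaders G H C h) := by
  rw [nextHeaders, nextHeaders, hc.intervalOf_expand hG hI hh he, ← chainSet_union,
    hc.newHeaders_expand hG hI hh, headSet_union,
    hc.headSet_sdiff_singleton hI.header_mem hh he]

lemma run_expand {𝒮 : Set (α × Set α)} (hG : G.IsCFG) (hrun : Run G H C 𝒮)
    (hI : G.StateInv H C) :
    Run (expand G chain e0) (headSet chain H) (chainSet chain C) (expandPairs chain 𝒮) := by
  induction hrun with
  | done C =>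
    rw [expandPairs_empty, headSet_empty]
    exact .done _
  | step H C h 𝒮 hh _ ih =>
    obtain ⟨e, he⟩ := hc.exists_head (hI.header_mem h hh)
    have hint := hc.intervalOf_expand (e0 := e0) hG hI hh he
    rw [expandPairs_insert he, ← hint]
    refine Run.step _ _ e _ ⟨h, hh, he⟩ ?_
    show Run _ (nextHeaders _ _ _ e) _ _
    rw [hc.nextHeaders_expand hG hI hh he, hint, ← chainSet_union]
    exact ih (hI.next hG hh)

end FreshChains

end Expand

end CFGraph

open CFGraph in
/-- Let `G` be a control flow graph with entry node `v₀ = G.entry`,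
and let `G′ = expand G chain e0` be the graph obtained from `G` by replacing every node
`v` of `G` by a nonempty directed chain of fresh nodes `chain v`, replacing every edge
`(u, v)` of `G` by an edge from the last node of `chain u` to the first node of
`chain v`, and taking the first node `e0` of `chain v₀` as the entry node of `G′`.
Then the interval partitions of `G` and `G′` (as produced by the header-selection
procedure) correspond: for every interval `I` of `G` with header `h`, the set
`⋃_{v ∈ I} chain v` is an interval of `G′` whose header is the first node of
`chain h`, and every interval of `G′` arises in this way. -/
theorem expand_interval_partition {α β : Type*} (G : CFGraph α) (hG : G.IsCFG)
    (chain : α → List β) (e0 : β)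
    (hne : ∀ v ∈ G.verts, chain v ≠ [])
    (hnodup : ∀ v ∈ G.verts, (chain v).Nodup)
    (hfresh : ∀ u ∈ G.verts, ∀ v ∈ G.verts, u ≠ v → ∀ x ∈ chain u, x ∉ chain v)
    (he0 : (chain G.entry).head? = some e0)
    (𝒮 : Set (α × Set α)) (hrun : Run G {G.entry} ∅ 𝒮)
    (𝒮' : Set (β × Set β)) (hrun' : Run (expand G chain e0) {e0} ∅ 𝒮') :
    (∀ p ∈ 𝒮, ∃ e, (chain p.1).head? = some e ∧
        (expand G chain e0).IsInterval e {x | ∃ v ∈ p.2, x ∈ chain v} ∧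
        (e, {x | ∃ v ∈ p.2, x ∈ chain v}) ∈ 𝒮') ∧
    (∀ q ∈ 𝒮', ∃ p ∈ 𝒮, (chain p.1).head? = some q.1 ∧
        q.2 = {x | ∃ v ∈ p.2, x ∈ chain v}) := by
  have hc : FreshChains G chain := ⟨hne, hnodup, hfresh⟩
  have hG' := hc.expand_isCFG hG he0
  have hsim := hc.run_expand (e0 := e0) hG hrun (.init hG)
  rw [headSet_singleton he0, chainSet_empty] at hsim
  obtain rfl := hrun'.unique hG' (.init hG') hsim
  refine ⟨fun ⟨h, S⟩ hp => ?_, fun q hq => hq⟩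
  obtain ⟨H₁, C₁, hI₁, hh₁, -⟩ := hrun.exists_state hG (.init hG) hp
  obtain ⟨e, he⟩ := hc.exists_head (hI₁.header_mem h hh₁)
  have hmem : (e, chainSet chain S) ∈ expandPairs chain 𝒮 := ⟨(h, S), hp, he, rfl⟩
  exact ⟨e, he, hrun'.isInterval hG' hmem, hmem⟩
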